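/- The Benjamini–Hochberg procedure at level α applied to p independent p-values, where the p₀ p-values corresponding to true null hypotheses are each uniformly distributed on [0,1], controls the false discovery rate: E[V/max(R,1)] ≤ (p₀/p)·α ≤ α, where R is the number of rejections and V the number of rejected true nulls. -/

import Mathlib

/-!
Fix a true null `i` and let `R⁽ⁱ⁾` be the number of BH rejections once `P i` is replaced by `0`.
Whenever `P i` passes either of the thresholds `R α / m` or `R⁽ⁱ⁾ α / m`, the two procedures
reject the same number of hypotheses, so the contribution `1{P i ≤ R α / m} / max(R, 1)` of `i`
to `V / max(R, 1)` equals `1{P i ≤ R⁽ⁱ⁾ α / m} / R⁽ⁱ⁾`. Now `R⁽ⁱ⁾ ∈ [1, m]` is a function of the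
other p-values, hence independent of the uniform `P i`, and conditioning on `R⁽ⁱ⁾ = k` gives the
expectation `∑ₖ k⁻¹ · (k α / m) · Pr(R⁽ⁱ⁾ = k) = α / m`. Summing over the nulls, the FDR is exactly
`p₀ α / m`.
-/

open MeasureTheory ProbabilityTheory

/-- The number of rejections of the Benjamini–Hochberg procedure at level `α` applied
to `m` p-values: the largest `k` such that at least `k` of the p-values are at most
`k·α/m` (equivalently, `P_{(k)} ≤ kα/m`). -/
noncomputable def bhRejections (m : ℕ) (α : ℝ) (pv : Fin m → ℝ) : ℕ :=
  sSup {k | k ≤ m ∧ k ≤ (Finset.univ.filter fun i => pv i ≤ k * α / m).card}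

open Finset Function

section BHRejections

variable {m : ℕ} {α : ℝ} {pv : Fin m → ℝ} {k : ℕ}

lemma bddAbove_bhRejections_set :
    BddAbove {k | k ≤ m ∧ k ≤ #{i | pv i ≤ k * α / m}} :=
  ⟨m, fun _ hk => hk.1⟩

lemma bhRejections_le_and_le_card :
    bhRejections m α pv ≤ m ∧
      bhRejections m α pv ≤ #{i | pv i ≤ bhRejections m α pv * α / m} :=
  Nat.sSup_mem ⟨0, by simp⟩ bddAbove_bhRejections_set

lemma le_bhRejections (hkm : k ≤ m) (hk : k ≤ #{i | pv i ≤ k * α / m}) :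
    k ≤ bhRejections m α pv :=
  le_csSup bddAbove_bhRejections_set ⟨hkm, hk⟩

lemma card_filter_update_zero (hα : 0 ≤ α) {i : Fin m} (hi : pv i ≤ k * α / m) :
    #{j | update pv i 0 j ≤ k * α / m} = #{j | pv j ≤ k * α / m} := by
  congr 1
  ext j
  rcases eq_or_ne j i with rfl | hj
  · simpa [hi] using by positivity
  · simp [update_of_ne hj]

lemma one_le_bhRejections_update_zero (hα : 0 ≤ α) (i : Fin m) :
    1 ≤ bhRejections m α (update pv i 0) := by
  refine le_bhRejections i.pos (one_le_card.mpr ⟨i, ?_⟩)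
  simpa using by positivity

lemma bhRejections_update_zero_mem_Icc (hα : 0 ≤ α) (i : Fin m) :
    bhRejections m α (update pv i 0) ∈ Icc 1 m :=
  mem_Icc.mpr ⟨one_le_bhRejections_update_zero hα i, bhRejections_le_and_le_card.1⟩

lemma bhRejections_le_update_zero (hα : 0 ≤ α) {i : Fin m}
    (hi : pv i ≤ bhRejections m α pv * α / m) :
    bhRejections m α pv ≤ bhRejections m α (update pv i 0) := by
  refine le_bhRejections bhRejections_le_and_le_card.1 ?_
  rw [card_filter_update_zero hα hi]
  exact bhRejections_le_and_le_card.2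

lemma bhRejections_eq_update_zero (hα : 0 ≤ α) {i : Fin m}
    (hi : pv i ≤ bhRejections m α (update pv i 0) * α / m) :
    bhRejections m α pv = bhRejections m α (update pv i 0) := by
  have hle : bhRejections m α (update pv i 0) ≤ bhRejections m α pv := by
    refine le_bhRejections bhRejections_le_and_le_card.1 ?_
    rw [← card_filter_update_zero hα hi]
    exact bhRejections_le_and_le_card.2
  refine le_antisymm (bhRejections_le_update_zero hα (hi.trans ?_)) hle
  gcongr

lemma ite_div_max_bhRejections_eq (hα : 0 ≤ α) (i : Fin m) :
    (if pv i ≤ bhRejections m α pv * α / m then (1 : ℝ) else 0) /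
        ((max (bhRejections m α pv) 1 : ℕ) : ℝ) =
      if pv i ≤ bhRejections m α (update pv i 0) * α / m then
        ((bhRejections m α (update pv i 0) : ℕ) : ℝ)⁻¹ else 0 := by
  by_cases hi : pv i ≤ bhRejections m α (update pv i 0) * α / m
  · rw [bhRejections_eq_update_zero hα hi, if_pos hi, if_pos hi,
      max_eq_left (one_le_bhRejections_update_zero hα i), one_div]
  · have hi' : ¬pv i ≤ bhRejections m α pv * α / m := fun h =>
      hi (h.trans (by gcongr; exact bhRejections_le_update_zero hα h))
    rw [if_neg hi, if_neg hi', zero_div]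

lemma card_filter_div_max_bhRejections_eq_sum (hα : 0 ≤ α) (H : Finset (Fin m)) :
    (#{i ∈ H | pv i ≤ bhRejections m α pv * α / m} : ℝ) /
        ((max (bhRejections m α pv) 1 : ℕ) : ℝ) =
      ∑ i ∈ H, if pv i ≤ bhRejections m α (update pv i 0) * α / m then
        ((bhRejections m α (update pv i 0) : ℕ) : ℝ)⁻¹ else 0 := by
  rw [card_filter, Nat.cast_sum, sum_div]
  refine sum_congr rfl fun i _ => ?_
  rw [← ite_div_max_bhRejections_eq hα i, Nat.cast_ite, Nat.cast_one, Nat.cast_zero]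

lemma bhRejections_eq_sup' (m : ℕ) (α : ℝ) (pv : Fin m → ℝ) :
    bhRejections m α pv = (range (m + 1)).sup' nonempty_range_add_one
      fun k => if k ≤ #{i | pv i ≤ k * α / m} then k else 0 := by
  obtain ⟨hle, hcard⟩ := bhRejections_le_and_le_card (α := α) (pv := pv)
  refine le_antisymm ?_ (sup'_le _ _ fun k hk => ?_)
  · exact le_sup'_of_le _ (mem_range_succ_iff.mpr hle) (by rw [if_pos hcard])
  · split_ifs with hk'
    · exact le_bhRejections (mem_range_succ_iff.mp hk) hk'
    · exact Nat.zero_le _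

lemma measurable_card_filter_le (c : ℝ) : Measurable fun pv : Fin m → ℝ => #{i | pv i ≤ c} := by
  simp_rw [card_filter]
  exact measurable_sum _ fun i _ =>
    Measurable.ite (measurableSet_le (measurable_pi_apply i) measurable_const)
      measurable_const measurable_const

lemma measurable_bhRejections (m : ℕ) (α : ℝ) : Measurable (bhRejections m α) := by
  simp_rw [funext (bhRejections_eq_sup' m α)]
  exact Finset.measurable_range_sup'' fun k _ => Measurable.ite
    (measurableSet_le measurable_const (measurable_card_filter_le _)) measurable_const
    measurable_const

end BHRejections

lemma ProbabilityTheory.iIndepFun.indepFun_comp_update {Ω ι β γ : Type*} [MeasurableSpace Ω]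
    {μ : Measure Ω} [Fintype ι] [DecidableEq ι] [MeasurableSpace β] [MeasurableSpace γ]
    {X : ι → Ω → β} (hX : iIndepFun X μ) (hXm : ∀ i, Measurable (X i)) (i : ι) (c : β)
    {F : (ι → β) → γ} (hF : Measurable F) :
    IndepFun (X i) (fun ω => F (update (fun j => X j ω) i c)) μ := by
  have hindep := hX.indepFun_finset {i} {i}ᶜ (disjoint_singleton_left.mpr (by simp)) hXm
  let extend (x : ({i}ᶜ : Finset ι) → β) (j : ι) : β :=
    if h : j = i then c else x ⟨j, by simpa using h⟩
  have hextend : Measurable extend := by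
    refine measurable_pi_lambda _ fun j => ?_
    by_cases h : j = i
    · simp [extend, h]
    · simpa [extend, h] using measurable_pi_apply _
  have hupdate : (fun ω => F (update (fun j => X j ω) i c)) =
      (F ∘ extend) ∘ fun ω (j : ({i}ᶜ : Finset ι)) => X j ω := by
    refine funext fun ω => congrArg F (funext fun j => ?_)
    by_cases h : j = i <;> simp [extend, h]
  rw [hupdate]
  exact hindep.comp (measurable_pi_apply (X := fun _ : ({i} : Finset ι) => β)
    ⟨i, mem_singleton_self i⟩) (hF.comp hextend)

section UniformThreshold

variable {Ω κ : Type*} {X : Ω → ℝ} {N : Ω → κ} {s : Finset κ} {t w : κ → ℝ}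

lemma ite_le_eq_sum_indicator {ω : Ω} (hω : N ω ∈ s) :
    (if X ω ≤ t (N ω) then w (N ω) else 0) =
      ∑ k ∈ s, (N ⁻¹' {k} ∩ X ⁻¹' Set.Iic (t k)).indicator (fun _ => w k) ω := by
  rw [sum_eq_single_of_mem (N ω) hω fun k _ hk => Set.indicator_of_notMem (fun h => hk h.1.symm) _]
  by_cases h : X ω ≤ t (N ω) <;> simp [h]

variable [MeasurableSpace Ω] {μ : Measure Ω} [MeasurableSpace κ] [MeasurableSingletonClass κ]

lemma measureReal_preimage_Iic_of_map_eq_uniform (hX : Measurable X)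
    (hunif : μ.map X = volume.restrict (Set.Icc 0 1)) {x : ℝ} (hx : x ∈ Set.Icc 0 1) :
    μ.real (X ⁻¹' Set.Iic x) = x := by
  have hIcc : Set.Iic x ∩ Set.Icc 0 1 = Set.Icc 0 x := by
    ext y
    simp only [Set.mem_inter_iff, Set.mem_Iic, Set.mem_Icc]
    constructor
    · exact fun ⟨hyx, hy0, _⟩ => ⟨hy0, hyx⟩
    · exact fun ⟨hy0, hyx⟩ => ⟨hyx, hy0, hyx.trans hx.2⟩
  rw [measureReal_def, ← Measure.map_apply hX measurableSet_Iic, hunif,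
    Measure.restrict_apply measurableSet_Iic, hIcc, Real.volume_Icc,
    sub_zero, ENNReal.toReal_ofReal hx.1]

lemma integrable_ite_le [IsFiniteMeasure μ] (hX : Measurable X) (hN : Measurable N)
    (hNs : ∀ ω, N ω ∈ s) :
    Integrable (fun ω => if X ω ≤ t (N ω) then w (N ω) else 0) μ := by
  simp_rw [ite_le_eq_sum_indicator (hNs _)]
  exact integrable_finsetSum _ fun k _ => (integrable_const _).indicator
    ((hN (measurableSet_singleton k)).inter (hX measurableSet_Iic))

lemma integral_ite_le_eq_of_mul_eq [IsProbabilityMeasure μ] (hX : Measurable X)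
    (hN : Measurable N) (hXN : IndepFun X N μ) (hunif : μ.map X = volume.restrict (Set.Icc 0 1))
    (hNs : ∀ ω, N ω ∈ s) (ht : ∀ k ∈ s, t k ∈ Set.Icc 0 1) {c : ℝ} (hwt : ∀ k ∈ s, w k * t k = c) :
    ∫ ω, (if X ω ≤ t (N ω) then w (N ω) else 0) ∂μ = c := by
  have hfiber : ∀ k, MeasurableSet (N ⁻¹' {k}) := fun k => hN (measurableSet_singleton k)
  have hterm : ∀ k ∈ s,
      ∫ ω, (N ⁻¹' {k} ∩ X ⁻¹' Set.Iic (t k)).indicator (fun _ => w k) ω ∂μ =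
        c * μ.real (N ⁻¹' {k}) := by
    intro k hk
    rw [integral_indicator_const _ ((hfiber k).inter (hX measurableSet_Iic)), Set.inter_comm,
      measureReal_def, hXN.measure_inter_preimage_eq_mul _ _ measurableSet_Iic
      (measurableSet_singleton k), ENNReal.toReal_mul, ← measureReal_def, ← measureReal_def,
      measureReal_preimage_Iic_of_map_eq_uniform hX hunif (ht k hk), smul_eq_mul, ← hwt k hk]
    ring
  have hcover : N ⁻¹' s = Set.univ := Set.eq_univ_of_forall hNs
  simp_rw [ite_le_eq_sum_indicator (hNs _)]
  rw [integral_finsetSum _ fun k _ => (integrable_const _).indicator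
    ((hfiber k).inter (hX measurableSet_Iic)), sum_congr rfl hterm, ← mul_sum,
    sum_measureReal_preimage_singleton s fun k _ => hfiber k, hcover, probReal_univ, mul_one]

end UniformThreshold

section NullContribution

variable {Ω : Type*} [MeasurableSpace Ω] {μ : Measure Ω} {m : ℕ} {α : ℝ} {P : Fin m → Ω → ℝ}

lemma measurable_bhRejections_update_zero (hP : ∀ i, Measurable (P i)) (i : Fin m) :
    Measurable fun ω => bhRejections m α (update (fun j => P j ω) i 0) :=
  (measurable_bhRejections m α).comp (by fun_prop)

lemma integrable_ite_le_bhRejections_update_zero [IsFiniteMeasure μ] (hα : 0 ≤ α)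
    (hP : ∀ i, Measurable (P i)) (i : Fin m) :
    Integrable (fun ω =>
      if P i ω ≤ bhRejections m α (update (fun j => P j ω) i 0) * α / m then
        ((bhRejections m α (update (fun j => P j ω) i 0) : ℕ) : ℝ)⁻¹ else 0) μ :=
  integrable_ite_le (t := fun k : ℕ => k * α / m) (w := fun k : ℕ => (k : ℝ)⁻¹) (hP i)
    (measurable_bhRejections_update_zero hP i) fun _ => bhRejections_update_zero_mem_Icc hα i

lemma integral_ite_le_bhRejections_update_zero [IsProbabilityMeasure μ] (hα : 0 ≤ α)
    (hα1 : α ≤ 1) (hP : ∀ i, Measurable (P i)) (hindep : iIndepFun P μ) {i : Fin m}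
    (hnull : μ.map (P i) = volume.restrict (Set.Icc 0 1)) :
    ∫ ω, (if P i ω ≤ bhRejections m α (update (fun j => P j ω) i 0) * α / m then
        ((bhRejections m α (update (fun j => P j ω) i 0) : ℕ) : ℝ)⁻¹ else 0) ∂μ = α / m := by
  refine integral_ite_le_eq_of_mul_eq (t := fun k : ℕ => k * α / m)
    (w := fun k : ℕ => (k : ℝ)⁻¹) (hP i) (measurable_bhRejections_update_zero hP i)
    (hindep.indepFun_comp_update hP i 0 (measurable_bhRejections m α)) hnull
    (fun _ => bhRejections_update_zero_mem_Icc hα i) (fun k hk => ?_) (fun k hk => ?_)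
  · have hkm : (k : ℝ) ≤ m := by exact_mod_cast (mem_Icc.mp hk).2
    exact ⟨by positivity, div_le_one_of_le₀ (by nlinarith) (Nat.cast_nonneg m)⟩
  · have hk0 : (k : ℝ) ≠ 0 := by exact_mod_cast (Nat.one_le_iff_ne_zero.mp (mem_Icc.mp hk).1)
    field_simp

end NullContribution

theorem benjamini_hochberg_fdr_control_general
    {Ω : Type*} {m : ℕ} [MeasurableSpace Ω] (Pr : Measure Ω) [IsProbabilityMeasure Pr]
    (α : ℝ) (hα0 : 0 < α) (hα1 : α ≤ 1)
    (P : Fin m → Ω → ℝ) (hmeas : ∀ i, Measurable (P i))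
    (hindep : iIndepFun P Pr)
    (H0 : Finset (Fin m)) (p0 : ℕ) (hp0 : H0.card = p0)
    (hnull : ∀ i ∈ H0,
      Measure.map (P i) Pr = volume.restrict (Set.Icc (0 : ℝ) 1)) :
    (∫ ω,
        (((H0.filter fun i =>
              P i ω ≤ (bhRejections m α fun i => P i ω) * α / m).card : ℝ) /
          ((max (bhRejections m α fun i => P i ω) 1 : ℕ) : ℝ)) ∂Pr)
        ≤ ((p0 : ℝ) / m) * α ∧
      ((p0 : ℝ) / m) * α ≤ α := by
  refine ⟨le_of_eq ?_, mul_le_of_le_one_left hα0.le (div_le_one_of_le₀ ?_ (Nat.cast_nonneg m))⟩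
  · calc _ = ∑ i ∈ H0, α / m :=
          (integral_congr_ae (ae_of_all _ fun ω =>
            card_filter_div_max_bhRejections_eq_sum hα0.le H0)).trans <|
          (integral_finsetSum H0 fun i _ =>
            integrable_ite_le_bhRejections_update_zero hα0.le hmeas i).trans <|
          sum_congr rfl fun i hi =>
            integral_ite_le_bhRejections_update_zero hα0.le hα1 hmeas hindep (hnull i hi)
      _ = (p0 : ℝ) / m * α := by rw [sum_const, hp0, nsmul_eq_mul]; ring
  · exact_mod_cast hp0 ▸ card_le_univ H0 |>.trans_eq (Fintype.card_fin m)

/-- Benjamini–Hochberg FDR control: with independent p-values whose null members are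
uniform on `[0,1]`, the BH procedure at level `α` satisfies
`E[V / max(R,1)] ≤ (p₀/p)·α ≤ α`. -/
theorem benjamini_hochberg_fdr_control
    {Ω : Type*} {m : ℕ} [MeasurableSpace Ω] (Pr : Measure Ω) [IsProbabilityMeasure Pr]
    (hm : 0 < m) (α : ℝ) (hα0 : 0 < α) (hα1 : α ≤ 1)
    (P : Fin m → Ω → ℝ) (hmeas : ∀ i, Measurable (P i))
    (hrange : ∀ i ω, P i ω ∈ Set.Icc (0 : ℝ) 1)
    (hindep : iIndepFun P Pr)
    (H0 : Finset (Fin m)) (p0 : ℕ) (hp0 : H0.card = p0)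
    (hnull : ∀ i ∈ H0,
      Measure.map (P i) Pr = volume.restrict (Set.Icc (0 : ℝ) 1)) :
    (∫ ω,
        (((H0.filter fun i =>
              P i ω ≤ (bhRejections m α fun i => P i ω) * α / m).card : ℝ) /
          ((max (bhRejections m α fun i => P i ω) 1 : ℕ) : ℝ)) ∂Pr)
        ≤ ((p0 : ℝ) / m) * α ∧
      ((p0 : ℝ) / m) * α ≤ α :=
  benjamini_hochberg_fdr_control_general Pr α hα0 hα1 P hmeas hindep H0 p0 hp0 hnull
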